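/- Let s be a local subgroupoid of a groupoid Q on a topological space X, given by an atlas U_s = {(U_i, H_i) : i ∈ I}. Then glob(s) equals the intersection over all refinements V_s of U_s of the subgroupoids glob(V_s) of Q generated by the members of V_s. -/

import Mathlib

open CategoryTheory

/-- A wide subgroupoid of the full subgroupoid `Q|U` of a groupoid `Q` on `X`. -/
structure WideSub (X : Type*) [Groupoid X] (U : Set X) where
  arrows : ∀ x y : X, Set (x ⟶ y)
  src_mem : ∀ {x y : X} {f : x ⟶ y}, f ∈ arrows x y → x ∈ U
  tgt_mem : ∀ {x y : X} {f : x ⟶ y}, f ∈ arrows x y → y ∈ U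
  id_mem : ∀ x, x ∈ U → 𝟙 x ∈ arrows x x
  inv_mem : ∀ {x y : X} {f : x ⟶ y}, f ∈ arrows x y → Groupoid.inv f ∈ arrows y x
  comp_mem : ∀ {x y z : X} {f : x ⟶ y} {g : y ⟶ z},
    f ∈ arrows x y → g ∈ arrows y z → f ≫ g ∈ arrows x z

/-- Inclusion of wide subgroupoids (on the same object set). -/
def WideSub.le {X : Type*} [Groupoid X] {U : Set X} (H K : WideSub X U) : Prop :=
  ∀ x y : X, H.arrows x y ⊆ K.arrows x y

/-- Equality of germs of wide subgroupoids at `x`. -/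
def germEquiv {X : Type*} [Groupoid X] [TopologicalSpace X] (x : X)
    (p q : Σ U : Set X, WideSub X U) : Prop :=
  ∃ W : Set X, IsOpen W ∧ x ∈ W ∧ W ⊆ p.1 ∩ q.1 ∧
    ∀ (a b : X) (f : a ⟶ b), a ∈ W → b ∈ W →
      (f ∈ p.2.arrows a b ↔ f ∈ q.2.arrows a b)

/-- The order on germs of wide subgroupoids at `x`. -/
def germLE {X : Type*} [Groupoid X] [TopologicalSpace X] (x : X)
    (p q : Σ U : Set X, WideSub X U) : Prop :=
  ∃ W : Set X, IsOpen W ∧ x ∈ W ∧ W ⊆ p.1 ∩ q.1 ∧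
    ∀ (a b : X) (f : a ⟶ b), a ∈ W → b ∈ W →
      f ∈ p.2.arrows a b → f ∈ q.2.arrows a b

/-- A local subgroupoid of the groupoid `Q` on the space `X`: a global section of the
sheaf of germs of wide subgroupoids, given concretely by a choice, for each `x`, of a
representative `(U x, H x)` with `x ∈ U x`, `U x` open, such that nearby germs agree. -/
structure LocalSub (X : Type*) [Groupoid X] [TopologicalSpace X] where
  U : X → Set X
  isOpen : ∀ x, IsOpen (U x)
  mem : ∀ x, x ∈ U x
  H : ∀ x, WideSub X (U x)
  compat : ∀ x y, y ∈ U x → germEquiv y ⟨U x, H x⟩ ⟨U y, H y⟩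

/-- The pointwise germ order on local subgroupoids. -/
def LocalSub.le {X : Type*} [Groupoid X] [TopologicalSpace X]
    (s t : LocalSub X) : Prop :=
  ∀ x : X, germLE x ⟨s.U x, s.H x⟩ ⟨t.U x, t.H x⟩

/-- `loc H`: the local subgroupoid `x ↦ [X, H]_x` of a wide subgroupoid `H` of `Q`. -/
def loc {X : Type*} [Groupoid X] [TopologicalSpace X]
    (H : WideSub X (Set.univ : Set X)) : LocalSub X where
  U _ := Set.univ
  isOpen _ := isOpen_univ
  mem _ := Set.mem_univ _
  H _ := H
  compat _ y _ := ⟨Set.univ, isOpen_univ, Set.mem_univ y,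
    fun z _ => ⟨Set.mem_univ z, Set.mem_univ z⟩, fun _ _ _ _ _ => Iff.rfl⟩

/-- `glob s`: the intersection of all wide subgroupoids `K` of `Q` with `s ≤ loc K`. -/
def globSub {X : Type*} [Groupoid X] [TopologicalSpace X]
    (s : LocalSub X) : WideSub X (Set.univ : Set X) where
  arrows x y := {f | ∀ K : WideSub X (Set.univ : Set X), s.le (loc K) → f ∈ K.arrows x y}
  src_mem _ := Set.mem_univ _
  tgt_mem _ := Set.mem_univ _
  id_mem x _ := fun K _ => K.id_mem x (Set.mem_univ x)
  inv_mem h := fun K hK => K.inv_mem (h K hK)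
  comp_mem hf hg := fun K hK => K.comp_mem (hf K hK) (hg K hK)

/-- An atlas `{(U i, H i) : i ∈ ι}` for a local subgroupoid `s`: an open cover together
with wide subgroupoids `H i` of `Q|U i` representing the germs of `s`. -/
structure Atlas {X : Type*} [Groupoid X] [TopologicalSpace X]
    (s : LocalSub X) (ι : Type*) where
  U : ι → Set X
  isOpen : ∀ i, IsOpen (U i)
  cover : ∀ x : X, ∃ i, x ∈ U i
  H : ∀ i, WideSub X (U i)
  germ : ∀ (i : ι) (x : X), x ∈ U i → germEquiv x ⟨U i, H i⟩ ⟨s.U x, s.H x⟩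

/-- The subgroupoid of `Q` generated by the members of an atlas. -/
def globAtlas {X : Type*} [Groupoid X] [TopologicalSpace X]
    {s : LocalSub X} {ι : Type*} (A : Atlas s ι) : WideSub X (Set.univ : Set X) where
  arrows x y := {f | ∀ K : WideSub X (Set.univ : Set X),
      (∀ (i : ι) (a b : X) (g : a ⟶ b), g ∈ (A.H i).arrows a b → g ∈ K.arrows a b) →
      f ∈ K.arrows x y}
  src_mem _ := Set.mem_univ _
  tgt_mem _ := Set.mem_univ _
  id_mem x _ := fun K hK =>
    Exists.elim (A.cover x) fun i hi => hK i x x (𝟙 x) ((A.H i).id_mem x hi)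
  inv_mem h := fun K hK => K.inv_mem (h K hK)
  comp_mem hf hg := fun K hK => K.comp_mem (hf K hK) (hg K hK)

/-- `B` refines `A`: every chart `(V j, K j)` of `B` is of the form
`(V j, H (i j) | V j)` for some chart of `A` with `V j ⊆ U (i j)`. -/
def Refines {X : Type*} [Groupoid X] [TopologicalSpace X] {s : LocalSub X}
    {ι κ : Type*} (B : Atlas s κ) (A : Atlas s ι) : Prop :=
  ∀ j : κ, ∃ i : ι, B.U j ⊆ A.U i ∧
    ∀ (a b : X) (f : a ⟶ b),
      (f ∈ (B.H j).arrows a b ↔ f ∈ (A.H i).arrows a b ∧ a ∈ B.U j ∧ b ∈ B.U j)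

/-! `glob s` is the smallest wide subgroupoid `K` with `s ≤ loc K`, and `s ≤ loc K` holds as
soon as `K` contains the charts of some atlas, so `glob s` lies in every `glob B`. Conversely, if
`s ≤ loc K`, shrinking each chart of `A` to a neighbourhood on which its germ agrees with `s` and
lies below `K` yields a refinement of `A` whose charts all lie in `K`; hence the intersection of
the `glob B` over refinements lies in every such `K`, i.e. in `glob s`. -/

section

variable {X : Type*} [Groupoid X]

def WideSub.restrict {U : Set X} (H : WideSub X U) (V : Set X) (hVU : V ⊆ U) :
    WideSub X V where
  arrows a b := {f | f ∈ H.arrows a b ∧ a ∈ V ∧ b ∈ V}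
  src_mem h := h.2.1
  tgt_mem h := h.2.2
  id_mem x hx := ⟨H.id_mem x (hVU hx), hx, hx⟩
  inv_mem h := ⟨H.inv_mem h.1, h.2.2, h.2.1⟩
  comp_mem hf hg := ⟨H.comp_mem hf.1 hg.1, hf.2.1, hg.2.2⟩

variable [TopologicalSpace X]

theorem germLE_of_germEquiv_of_germLE {x : X} {p q r : Σ U : Set X, WideSub X U}
    (hpq : germEquiv x p q) (hqr : germLE x q r) : germLE x p r := by
  obtain ⟨W, hW, hxW, hWpq, hpq⟩ := hpq
  obtain ⟨W', hW', hxW', hWqr, hqr⟩ := hqr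
  refine ⟨W ∩ W', hW.inter hW', ⟨hxW, hxW'⟩,
    fun a ha => ⟨(hWpq ha.1).1, (hWqr ha.2).2⟩, ?_⟩
  intro a b f ha hb hf
  exact hqr a b f ha.2 hb.2 ((hpq a b f ha.1 hb.1).mp hf)

theorem germEquiv_restrict {x : X} {U V : Set X} {H : WideSub X U}
    {q : Σ U : Set X, WideSub X U}
    (h : germEquiv x ⟨U, H⟩ q) (hV : IsOpen V) (hxV : x ∈ V) (hVU : V ⊆ U) :
    germEquiv x ⟨V, H.restrict V hVU⟩ q := by
  obtain ⟨W, hW, hxW, hWUq, hiff⟩ := h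
  refine ⟨V ∩ W, hV.inter hW, ⟨hxV, hxW⟩, fun a ha => ⟨ha.1, (hWUq ha.2).2⟩, ?_⟩
  intro a b f ha hb
  exact ⟨fun hf => (hiff a b f ha.2 hb.2).mp hf.1,
    fun hf => ⟨(hiff a b f ha.2 hb.2).mpr hf, ha.1, hb.1⟩⟩

namespace Atlas

variable {s : LocalSub X} {ι κ : Type*}

def restrict (A : Atlas s ι) (V : κ → Set X) (i : κ → ι) (hV : ∀ j, IsOpen (V j))
    (hcover : ∀ x, ∃ j, x ∈ V j) (hVU : ∀ j, V j ⊆ A.U (i j)) : Atlas s κ where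
  U := V
  isOpen := hV
  cover := hcover
  H j := (A.H (i j)).restrict (V j) (hVU j)
  germ j x hx := germEquiv_restrict (A.germ (i j) x (hVU j hx)) (hV j) hx (hVU j)

theorem restrict_refines (A : Atlas s ι) (V : κ → Set X) (i : κ → ι)
    (hV : ∀ j, IsOpen (V j)) (hcover : ∀ x, ∃ j, x ∈ V j) (hVU : ∀ j, V j ⊆ A.U (i j)) :
    Refines (A.restrict V i hV hcover hVU) A :=
  fun j => ⟨i j, hVU j, fun _ _ _ => Iff.rfl⟩

theorem le_loc_of_charts_le (B : Atlas s κ) {K : WideSub X Set.univ}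
    (hK : ∀ (j : κ) (a b : X) (g : a ⟶ b), g ∈ (B.H j).arrows a b → g ∈ K.arrows a b) :
    s.le (loc K) := by
  intro z
  obtain ⟨j, hzj⟩ := B.cover z
  obtain ⟨W, hW, hzW, hWsub, hiff⟩ := B.germ j z hzj
  refine ⟨W, hW, hzW, fun a ha => ⟨(hWsub ha).2, Set.mem_univ a⟩, ?_⟩
  intro a b g ha hb hg
  exact hK j a b g ((hiff a b g ha hb).mpr hg)

theorem exists_refines_charts_le (A : Atlas s ι) {K : WideSub X Set.univ}
    (hK : s.le (loc K)) :
    ∃ B : Atlas s X, Refines B A ∧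
      ∀ (j : X) (a b : X) (g : a ⟶ b), g ∈ (B.H j).arrows a b → g ∈ K.arrows a b := by
  choose i hi using A.cover
  choose W hW hzW hWsub hWK using
    fun z => germLE_of_germEquiv_of_germLE (A.germ (i z) z (hi z)) (hK z)
  have hWU : ∀ z, W z ⊆ A.U (i z) := fun z _ ha => (hWsub z ha).1
  refine ⟨A.restrict W i hW (fun z => ⟨z, hzW z⟩) hWU, A.restrict_refines _ _ _ _ _, ?_⟩
  rintro j a b g ⟨hg, ha, hb⟩
  exact hWK j a b g ha hb hg

end Atlas

end

theorem globSub_eq_iInter_refinements {X : Type} [Groupoid X] [TopologicalSpace X]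
    (s : LocalSub X) {ι : Type} (A : Atlas s ι) :
    ∀ (x y : X) (f : x ⟶ y),
      f ∈ (globSub s).arrows x y ↔
        ∀ (κ : Type) (B : Atlas s κ), Refines B A → f ∈ (globAtlas B).arrows x y := by
  intro x y f
  constructor
  · intro hf κ B _ K hK
    exact hf K (B.le_loc_of_charts_le hK)
  · intro hf K hK
    obtain ⟨B, hBA, hBK⟩ := A.exists_refines_charts_le hK
    exact hf X B hBA K hBK
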